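/- Let c be an integer with c ≥ 4 and c ≢ 1 (mod 4). The number of numerical semigroups with the Arf property having multiplicity 4 and conductor c equals c/4 if c ≡ 0 (mod 4), equals (c−2)/4 if c ≡ 2 (mod 4), and equals 1 if c ≡ 3 (mod 4). -/

import Mathlib

/-- A numerical semigroup: a subset of ℕ containing 0, closed under addition,
with finite complement. -/
def IsNumericalSemigroup (S : Set ℕ) : Prop :=
  0 ∈ S ∧ (∀ a ∈ S, ∀ b ∈ S, a + b ∈ S) ∧ Sᶜ.Finite

/-- The Arf property: for all x ≥ y ≥ z in S, x + y - z ∈ S. -/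
def HasArfProperty (S : Set ℕ) : Prop :=
  ∀ x ∈ S, ∀ y ∈ S, ∀ z ∈ S, z ≤ y → y ≤ x → x + y - z ∈ S

/-- The conductor: the least c such that every n ≥ c lies in S. -/
noncomputable def conductorOf (S : Set ℕ) : ℕ := sInf {c | ∀ n, c ≤ n → n ∈ S}

/-- The Frobenius number: the largest natural number not in S. -/
noncomputable def frobeniusOf (S : Set ℕ) : ℕ := sSup {n | n ∉ S}

/-- The genus: the number of gaps of S. -/
noncomputable def genusOf (S : Set ℕ) : ℕ := Sᶜ.ncard

/-- The multiplicity: the least positive element of S. -/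
noncomputable def multiplicityOf (S : Set ℕ) : ℕ := sInf {n | n ∈ S ∧ 0 < n}

/-- w(i) = min { s ∈ S : s ≡ i (mod m) }. -/
noncomputable def aperyW (S : Set ℕ) (m i : ℕ) : ℕ := sInf {s | s ∈ S ∧ s % m = i}

/-- The cocycle h(i,j) = (w(i) + w(j) - w((i+j) mod m)) / m, as a rational number. -/
noncomputable def cocycle (S : Set ℕ) (m i j : ℕ) : ℚ :=
  ((aperyW S m i : ℚ) + (aperyW S m j : ℚ) - (aperyW S m ((i + j) % m) : ℚ)) / (m : ℚ)

/-- An Arf sequence (x₁, …, xₙ), 0-indexed: xₙ ≥ ⋯ ≥ x₁ ≥ 2, and each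
x_{i+1} is either a sum x_i + ⋯ + x_j for some j ≤ i, or at least x_i + ⋯ + x₁. -/
def ArfSeq (n : ℕ) (x : Fin n → ℕ) : Prop :=
  1 ≤ n ∧ Monotone x ∧ (∀ i, 2 ≤ x i) ∧
  ∀ i : Fin n, ∀ h : i.1 + 1 < n,
    (∃ j : Fin n, j ≤ i ∧ x ⟨i.1 + 1, h⟩ = ∑ k ∈ Finset.Icc j i, x k) ∨
    (∑ k ∈ Finset.Iic i, x k) ≤ x ⟨i.1 + 1, h⟩

/-- The set S(x₁,…,xₙ) = {0} ∪ {xₙ + ⋯ + x_k : 1 ≤ k ≤ n} ∪ {z : z ≥ x₁ + ⋯ + xₙ}. -/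
def arfSet (n : ℕ) (x : Fin n → ℕ) : Set ℕ :=
  {z | z = 0 ∨ (∃ k : Fin n, z = ∑ i ∈ Finset.Ici k, x i) ∨ (∑ i, x i) ≤ z}

/-- The numerical-semigroup-like set generated by A ⊆ ℕ. -/
def genNS (A : Set ℕ) : Set ℕ := (AddSubmonoid.closure A : Set ℕ)

/-!
Removing the multiplicity of an Arf semigroup of multiplicity `m`, `S ↦ {t | t + m ∈ S}`, is a
bijection onto the Arf semigroups containing `m` and lowers the conductor by `m`. For `m = 4` and
conductor `d ≥ 4`, such a semigroup has multiplicity 4 or 2 (multiplicity 1 forces conductor 0,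
and `3, 4 ∈ T` give `5 = 4 + 4 - 3 ∈ T`, hence conductor 3), and multiplicity 2 means
`T = {even numbers} ∪ [d, ∞)` with `d` even. So the count `a c` obeys
`a c = a (c - 4) + [c even]` for `c ≥ 8`, with `a 4 = a 6 = a 7 = 1`.
-/

namespace NumericalSemigroup

section

variable {S : Set ℕ}

lemma IsNumericalSemigroup.add_mul_mem (hS : IsNumericalSemigroup S) {n a : ℕ} (hn : n ∈ S)
    (ha : a ∈ S) (k : ℕ) : n + k * a ∈ S := by
  induction k with
  | zero => simpa using hn
  | succ k ih => simpa [add_mul, ← add_assoc] using hS.2.1 _ ih _ ha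

lemma HasArfProperty.add_sub_mem {x y z : ℕ} (hArf : HasArfProperty S) (hx : x ∈ S) (hy : y ∈ S)
    (hz : z ∈ S) (hzx : z ≤ x) (hzy : z ≤ y) : x + y - z ∈ S := by
  rcases le_total y x with hyx | hxy
  · exact hArf x hx y hy z hz hzy hyx
  · simpa [add_comm] using hArf y hy x hx z hz hzx hxy

lemma mem_of_conductorOf_le (hfin : Sᶜ.Finite) {n : ℕ} (hn : conductorOf S ≤ n) : n ∈ S := by
  obtain ⟨b, hb⟩ := hfin.bddAbove
  have hne : {c | ∀ n, c ≤ n → n ∈ S}.Nonempty :=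
    ⟨b + 1, fun n hn => by_contra fun h => by have := hb (Set.mem_compl h); omega⟩
  exact Nat.sInf_mem hne n hn

lemma conductorOf_eq_iff (hfin : Sᶜ.Finite) {c : ℕ} (hc : 0 < c) :
    conductorOf S = c ↔ (∀ n, c ≤ n → n ∈ S) ∧ c - 1 ∉ S := by
  constructor
  · rintro rfl
    refine ⟨fun n => mem_of_conductorOf_le hfin, fun h => ?_⟩
    have : conductorOf S ≤ conductorOf S - 1 := Nat.sInf_le fun n hn => by
      rcases hn.eq_or_lt with rfl | hlt
      · exact h
      · exact mem_of_conductorOf_le hfin (by omega)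
    omega
  · rintro ⟨hge, hc1⟩
    refine IsLeast.csInf_eq ⟨hge, fun c' hc' => ?_⟩
    by_contra! h
    exact hc1 (hc' _ (by omega))

lemma multiplicityOf_eq_iff (hfin : Sᶜ.Finite) {m : ℕ} (hm : 0 < m) :
    multiplicityOf S = m ↔ m ∈ S ∧ ∀ n, 0 < n → n < m → n ∉ S := by
  constructor
  · rintro rfl
    have hne : {n | n ∈ S ∧ 0 < n}.Nonempty :=
      ⟨conductorOf S + 1, mem_of_conductorOf_le hfin (by omega), by omega⟩
    refine ⟨(Nat.sInf_mem hne).1, fun n hn hlt hnS => ?_⟩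
    have : multiplicityOf S ≤ n := Nat.sInf_le ⟨hnS, hn⟩
    omega
  · rintro ⟨hmS, hgap⟩
    refine IsLeast.csInf_eq ⟨⟨hmS, hm⟩, fun n ⟨hnS, hn⟩ => ?_⟩
    by_contra! h
    exact hgap n hn h hnS

lemma finite_setOf_Ici_subset (c : ℕ) : {S : Set ℕ | Set.Ici c ⊆ S}.Finite := by
  refine Set.Finite.of_finite_image (f := (· ∩ Set.Iio c)) ((Set.finite_Iio c).powerset.subset ?_)
    fun S hS S' hS' h => ?_
  · rintro _ ⟨S, -, rfl⟩
    exact Set.inter_subset_right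
  · ext n
    by_cases hn : n < c
    · simpa [hn] using congrArg (n ∈ ·) h
    · exact iff_of_true (hS (not_lt.1 hn)) (hS' (not_lt.1 hn))

end

def ordinary (c : ℕ) : Set ℕ := {n | n = 0 ∨ c ≤ n}

lemma ordinary_isNumericalSemigroup (c : ℕ) : IsNumericalSemigroup (ordinary c) := by
  refine ⟨Or.inl rfl, fun a ha b hb => ?_, (Set.finite_Iio c).subset fun n hn => ?_⟩
  · simp only [ordinary, Set.mem_ofPred_eq] at *
    omega
  · simp only [ordinary, Set.mem_compl_iff, Set.mem_ofPred_eq, Set.mem_Iio] at *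
    omega

lemma ordinary_hasArfProperty (c : ℕ) : HasArfProperty (ordinary c) := by
  intro x hx y hy z hz hzy hyx
  simp only [ordinary, Set.mem_ofPred_eq] at *
  omega

lemma conductorOf_ordinary {c : ℕ} (hc : 1 < c) : conductorOf (ordinary c) = c :=
  (conductorOf_eq_iff (ordinary_isNumericalSemigroup c).2.2 (by omega)).2
    ⟨fun _ => Or.inr, by simp only [ordinary, Set.mem_ofPred_eq]; omega⟩

lemma multiplicityOf_ordinary {c : ℕ} (hc : 0 < c) : multiplicityOf (ordinary c) = c :=
  (multiplicityOf_eq_iff (ordinary_isNumericalSemigroup c).2.2 hc).2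
    ⟨Or.inr le_rfl, fun n hn hlt => by simp only [ordinary, Set.mem_ofPred_eq]; omega⟩

lemma eq_ordinary {S : Set ℕ} {c : ℕ} (h0 : 0 ∈ S) (hgap : ∀ n, 0 < n → n < c → n ∉ S)
    (hge : ∀ n, c ≤ n → n ∈ S) : S = ordinary c := by
  ext n
  rcases Nat.eq_zero_or_pos n with rfl | hn
  · exact iff_of_true h0 (Or.inl rfl)
  · by_cases hnc : c ≤ n
    · exact iff_of_true (hge n hnc) (Or.inr hnc)
    · exact iff_of_false (hgap n hn (by omega)) (by simp only [ordinary, Set.mem_ofPred_eq]; omega)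

def arfSemigroups (m c : ℕ) : Set (Set ℕ) :=
  {S | IsNumericalSemigroup S ∧ HasArfProperty S ∧ multiplicityOf S = m ∧ conductorOf S = c}

def arfSemigroupsContaining (m d : ℕ) : Set (Set ℕ) :=
  {T | IsNumericalSemigroup T ∧ HasArfProperty T ∧ m ∈ T ∧ conductorOf T = d}

lemma arfSemigroups_finite (m c : ℕ) : (arfSemigroups m c).Finite :=
  (finite_setOf_Ici_subset c).subset fun _ ⟨hS, _, _, hc⟩ _ hn =>
    mem_of_conductorOf_le hS.2.2 (hc ▸ hn)

lemma arfSemigroups_subset_arfSemigroupsContaining {m : ℕ} (hm : 0 < m) (d : ℕ) :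
    arfSemigroups m d ⊆ arfSemigroupsContaining m d :=
  fun _ ⟨hS, hArf, hmult, hc⟩ => ⟨hS, hArf, ((multiplicityOf_eq_iff hS.2.2 hm).1 hmult).1, hc⟩

lemma arfSemigroups_self {m : ℕ} (hm : 1 < m) : arfSemigroups m m = {ordinary m} := by
  ext S
  refine ⟨fun ⟨hS, _, hmult, hc⟩ => ?_, ?_⟩
  · exact eq_ordinary hS.1 ((multiplicityOf_eq_iff hS.2.2 (by omega)).1 hmult).2
      ((conductorOf_eq_iff hS.2.2 (by omega)).1 hc).1
  · rintro rfl
    exact ⟨ordinary_isNumericalSemigroup m, ordinary_hasArfProperty m,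
      multiplicityOf_ordinary (by omega), conductorOf_ordinary hm⟩

lemma arfSemigroupsContaining_of_le_three {m d : ℕ} (hd : 2 ≤ d) (hd3 : d ≤ 3) (hdm : d ≤ m) :
    arfSemigroupsContaining m d = {ordinary d} := by
  ext T
  refine ⟨fun ⟨hT, _, _, hc⟩ => ?_, ?_⟩
  · obtain ⟨hge, hd1⟩ := (conductorOf_eq_iff hT.2.2 (by omega)).1 hc
    refine eq_ordinary hT.1 (fun n hn hnd hnT => hd1 ?_) hge
    -- a nonzero element below `d ≤ 3` is `1`, whose multiples reach `d - 1`, or it is `2 = d - 1`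
    obtain rfl | rfl : n = 1 ∨ n = 2 := by omega
    · rw [show d - 1 = 1 + (d - 2) * 1 by omega]
      exact IsNumericalSemigroup.add_mul_mem hT hnT hnT _
    · rwa [show d - 1 = 2 by omega]
  · rintro rfl
    exact ⟨ordinary_isNumericalSemigroup d, ordinary_hasArfProperty d, Or.inr hdm,
      conductorOf_ordinary (by omega)⟩

section

variable {m : ℕ}

def shiftUp (m : ℕ) (T : Set ℕ) : Set ℕ := {n | n = 0 ∨ (m ≤ n ∧ n - m ∈ T)}

def shiftDown (m : ℕ) (S : Set ℕ) : Set ℕ := {t | t + m ∈ S}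

lemma shiftDown_shiftUp (hm : 0 < m) (T : Set ℕ) : shiftDown m (shiftUp m T) = T := by
  ext t
  simp only [shiftDown, shiftUp, Set.mem_ofPred_eq, Nat.add_sub_cancel]
  constructor
  · rintro (h | ⟨-, h⟩)
    · omega
    · exact h
  · exact fun h => Or.inr ⟨by omega, h⟩

lemma shiftUp_shiftDown {S : Set ℕ} (h0 : 0 ∈ S) (hgap : ∀ n, 0 < n → n < m → n ∉ S) :
    shiftUp m (shiftDown m S) = S := by
  ext n
  simp only [shiftUp, shiftDown, Set.mem_ofPred_eq]
  constructor
  · rintro (rfl | ⟨hn, h⟩)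
    · exact h0
    · rwa [Nat.sub_add_cancel hn] at h
  · intro hn
    rcases Nat.eq_zero_or_pos n with rfl | hpos
    · exact Or.inl rfl
    · have hmn : m ≤ n := not_lt.1 fun hlt => hgap n hpos hlt hn
      exact Or.inr ⟨hmn, by rwa [Nat.sub_add_cancel hmn]⟩

lemma shiftUp_mem {T : Set ℕ} {d : ℕ} (hm : 0 < m) (hd : 0 < d)
    (hT : T ∈ arfSemigroupsContaining m d) : shiftUp m T ∈ arfSemigroups m (d + m) := by
  obtain ⟨⟨h0, hadd, hfin⟩, hArf, hmT, hc⟩ := hT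
  obtain ⟨hge, hd1⟩ := (conductorOf_eq_iff hfin hd).1 hc
  have hclos : ∀ a ∈ shiftUp m T, ∀ b ∈ shiftUp m T, a + b ∈ shiftUp m T := by
    rintro a (rfl | ⟨ha, haT⟩) b hb
    · simpa using hb
    rcases hb with rfl | ⟨hb, hbT⟩
    · exact Or.inr ⟨by omega, haT⟩
    refine Or.inr ⟨by omega, ?_⟩
    have := hadd _ (hadd _ haT _ hbT) _ hmT
    rwa [show a - m + (b - m) + m = a + b - m by omega] at this
  have hfin' : (shiftUp m T)ᶜ.Finite := (Set.finite_Iio (d + m)).subset fun n hn =>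
    Set.mem_Iio.2 <| not_le.1 fun h => hn (Or.inr ⟨by omega, hge _ (by omega)⟩)
  refine ⟨⟨Or.inl rfl, hclos, hfin'⟩, ?_, ?_, ?_⟩
  · rintro x hx y hy z (rfl | ⟨hz, hzT⟩) hzy hyx
    · exact hclos x hx y hy
    obtain ⟨hx, hxT⟩ := hx.resolve_left (by omega)
    obtain ⟨hy, hyT⟩ := hy.resolve_left (by omega)
    have := hArf _ hxT _ hyT _ hzT (by omega) (by omega)
    rw [show x - m + (y - m) - (z - m) = x + y - z - m by omega] at this
    exact Or.inr ⟨by omega, this⟩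
  · refine (multiplicityOf_eq_iff hfin' hm).2 ⟨Or.inr ⟨le_rfl, by simpa using h0⟩, ?_⟩
    rintro n hn hnm (rfl | ⟨h, -⟩) <;> omega
  · refine (conductorOf_eq_iff hfin' (by omega)).2
      ⟨fun n hn => Or.inr ⟨by omega, hge _ (by omega)⟩, ?_⟩
    rintro (h | ⟨-, h⟩)
    · omega
    · exact hd1 (by rwa [show d + m - 1 - m = d - 1 by omega] at h)

lemma shiftDown_mem {S : Set ℕ} {c : ℕ} (hm : 0 < m) (hmc : m < c)
    (hS : S ∈ arfSemigroups m c) : shiftDown m S ∈ arfSemigroupsContaining m (c - m) := by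
  obtain ⟨⟨-, hadd, hfin⟩, hArf, hmult, hc⟩ := hS
  obtain ⟨hmS, -⟩ := (multiplicityOf_eq_iff hfin hm).1 hmult
  obtain ⟨hge, hc1⟩ := (conductorOf_eq_iff hfin (by omega)).1 hc
  have hfin' : (shiftDown m S)ᶜ.Finite := (Set.finite_Iio (c - m)).subset fun n hn =>
    Set.mem_Iio.2 <| not_le.1 fun h => hn (hge _ (by omega))
  refine ⟨⟨by simpa [shiftDown] using hmS, fun a ha b hb => ?_, hfin'⟩, ?_, hadd _ hmS _ hmS, ?_⟩
  · have := HasArfProperty.add_sub_mem hArf ha hb hmS (by omega) (by omega)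
    rwa [show a + m + (b + m) - m = a + b + m by omega] at this
  · intro x hx y hy z hz hzy hyx
    have := hArf _ hx _ hy _ hz (by omega) (by omega)
    rwa [show x + m + (y + m) - (z + m) = x + y - z + m by omega] at this
  · refine (conductorOf_eq_iff hfin' (by omega)).2 ⟨fun n hn => hge _ (by omega), ?_⟩
    change c - m - 1 + m ∉ S
    rwa [show c - m - 1 + m = c - 1 by omega]

lemma arfSemigroups_eq_image (hm : 0 < m) {c : ℕ} (hmc : m < c) :
    arfSemigroups m c = shiftUp m '' arfSemigroupsContaining m (c - m) := by
  ext S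
  refine ⟨fun hS => ⟨shiftDown m S, shiftDown_mem hm hmc hS, ?_⟩, ?_⟩
  · obtain ⟨hS, -, hmult, -⟩ := hS
    exact shiftUp_shiftDown hS.1 ((multiplicityOf_eq_iff hS.2.2 hm).1 hmult).2
  · rintro ⟨T, hT, rfl⟩
    simpa [Nat.sub_add_cancel hmc.le] using shiftUp_mem hm (by omega) hT

lemma ncard_arfSemigroups (hm : 0 < m) {c : ℕ} (hmc : m < c) :
    (arfSemigroups m c).ncard = (arfSemigroupsContaining m (c - m)).ncard := by
  rw [arfSemigroups_eq_image hm hmc,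
    Set.ncard_image_of_injective _ (Function.LeftInverse.injective (shiftDown_shiftUp hm))]

end

def evensAbove (d : ℕ) : Set ℕ := {n | Even n ∨ d ≤ n}

lemma evensAbove_mem_arfSemigroupsContaining {d : ℕ} (hd : 0 < d) (hde : Even d) :
    evensAbove d ∈ arfSemigroupsContaining 4 d := by
  have hfin : (evensAbove d)ᶜ.Finite := (Set.finite_Iio d).subset fun n hn =>
    Set.mem_Iio.2 <| not_le.1 fun h => hn (Or.inr h)
  refine ⟨⟨Or.inl ⟨0, rfl⟩, fun a ha b hb => ?_, hfin⟩, fun x hx y hy z hz hzy hyx => ?_,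
    Or.inl ⟨2, rfl⟩, (conductorOf_eq_iff hfin hd).2 ⟨fun _ => Or.inr, ?_⟩⟩ <;>
  simp only [evensAbove, Set.mem_ofPred_eq, Nat.even_iff] at * <;> omega

lemma eq_evensAbove_of_two_mem {T : Set ℕ} {d : ℕ} (hT : IsNumericalSemigroup T) (hd : 0 < d)
    (hc : conductorOf T = d) (h2 : 2 ∈ T) : Even d ∧ T = evensAbove d := by
  obtain ⟨hge, hd1⟩ := (conductorOf_eq_iff hT.2.2 hd).1 hc
  have heven : ∀ n, Even n → n ∈ T := by
    rintro n ⟨k, rfl⟩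
    simpa [mul_two] using IsNumericalSemigroup.add_mul_mem hT hT.1 h2 k
  have hde : Even d := by
    by_contra hodd
    rw [Nat.even_iff] at hodd
    exact hd1 (heven _ (Nat.even_iff.2 (by omega)))
  refine ⟨hde, Set.Subset.antisymm (fun n hn => ?_) fun n => ?_⟩
  · by_contra h
    simp only [evensAbove, Set.mem_ofPred_eq, Nat.even_iff, not_or] at h
    rw [Nat.even_iff] at hde
    have := IsNumericalSemigroup.add_mul_mem hT hn h2 ((d - 1 - n) / 2)
    exact hd1 (by rwa [show n + (d - 1 - n) / 2 * 2 = d - 1 by omega] at this)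
  · rintro (hn | hn)
    · exact heven n hn
    · exact hge n hn

lemma Ici_three_subset {T : Set ℕ} (hT : IsNumericalSemigroup T) (hArf : HasArfProperty T)
    (h3 : 3 ∈ T) (h4 : 4 ∈ T) : Set.Ici 3 ⊆ T := by
  have h5 : 5 ∈ T := hArf 4 h4 4 h4 3 h3 (by omega) (by omega)
  have hrun : ∀ k, k + 3 ∈ T ∧ k + 4 ∈ T ∧ k + 5 ∈ T := by
    intro k
    induction k with
    | zero => exact ⟨h3, h4, h5⟩
    | succ k ih => exact ⟨ih.2.1, ih.2.2, hT.2.1 _ ih.1 _ h3⟩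
  intro n hn
  simpa [Nat.sub_add_cancel (Set.mem_Ici.1 hn)] using (hrun (n - 3)).1

lemma mem_arfSemigroupsContaining_four_iff {T : Set ℕ} {d : ℕ} (hd : 4 ≤ d) :
    T ∈ arfSemigroupsContaining 4 d ↔ (Even d ∧ T = evensAbove d) ∨ T ∈ arfSemigroups 4 d := by
  refine ⟨fun ⟨hT, hArf, h4, hc⟩ => ?_, ?_⟩
  · obtain ⟨hge, hd1⟩ := (conductorOf_eq_iff hT.2.2 (by omega)).1 hc
    have h1 : 1 ∉ T := fun h1 => hd1 <| by
      simpa using IsNumericalSemigroup.add_mul_mem hT hT.1 h1 (d - 1)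
    by_cases h2 : 2 ∈ T
    · exact Or.inl (eq_evensAbove_of_two_mem hT (by omega) hc h2)
    have h3 : 3 ∉ T := fun h3 => hd1 (Ici_three_subset hT hArf h3 h4 (Set.mem_Ici.2 (by omega)))
    refine Or.inr ⟨hT, hArf, (multiplicityOf_eq_iff hT.2.2 (by omega)).2 ⟨h4, ?_⟩, hc⟩
    intro n hn hn4
    obtain rfl | rfl | rfl : n = 1 ∨ n = 2 ∨ n = 3 := by omega
    exacts [h1, h2, h3]
  · rintro (⟨hde, rfl⟩ | hT)
    · exact evensAbove_mem_arfSemigroupsContaining (by omega) hde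
    · exact arfSemigroups_subset_arfSemigroupsContaining (by omega) d hT

lemma ncard_arfSemigroupsContaining_four {d : ℕ} (hd : 4 ≤ d) :
    (arfSemigroupsContaining 4 d).ncard = (arfSemigroups 4 d).ncard + if Even d then 1 else 0 := by
  have hnot : evensAbove d ∉ arfSemigroups 4 d := fun ⟨hS, _, hmult, _⟩ =>
    ((multiplicityOf_eq_iff hS.2.2 (by omega)).1 hmult).2 2 (by omega) (by omega) (Or.inl even_two)
  split_ifs with hde
  · rw [show arfSemigroupsContaining 4 d = insert (evensAbove d) (arfSemigroups 4 d) by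
      ext T; simp [mem_arfSemigroupsContaining_four_iff hd, hde],
      Set.ncard_insert_of_notMem hnot (arfSemigroups_finite 4 d)]
  · rw [show arfSemigroupsContaining 4 d = arfSemigroups 4 d by
      ext T; simp [mem_arfSemigroupsContaining_four_iff hd, hde], add_zero]

end NumericalSemigroup

open NumericalSemigroup

theorem arf_multiplicity_four_count (c : ℕ) (hc : 4 ≤ c) (h1 : c % 4 ≠ 1) :
    Set.ncard {S : Set ℕ | IsNumericalSemigroup S ∧ HasArfProperty S ∧
        multiplicityOf S = 4 ∧ conductorOf S = c} =
      if c % 4 = 0 then c / 4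
      else if c % 4 = 2 then (c - 2) / 4
      else 1 := by
  induction c using Nat.strong_induction_on with
  | _ c ih =>
  change (arfSemigroups 4 c).ncard = _
  obtain rfl | rfl | rfl | hc8 : c = 4 ∨ c = 6 ∨ c = 7 ∨ 8 ≤ c := by omega
  · simp [arfSemigroups_self]
  · simp [ncard_arfSemigroups, arfSemigroupsContaining_of_le_three]
  · simp [ncard_arfSemigroups, arfSemigroupsContaining_of_le_three]
  · have ih' : (arfSemigroups 4 (c - 4)).ncard = _ := ih (c - 4) (by omega) (by omega) (by omega)
    rw [ncard_arfSemigroups (by omega) (by omega), ncard_arfSemigroupsContaining_four (by omega),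
      ih']
    simp only [Nat.even_iff]
    split_ifs <;> omega
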